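/- Let n > 2k, B(y) = (1+ρ_{n,k}|y|²)^{-(n-2k)/2}, and Z_j = ∂B/∂y_j for j = 1,…,n. Then Δ^k Z_j = ((n+2k)/(n-2k)) · B^{4k/(n-2k)} · Z_j on ℝⁿ. -/

import Mathlib

noncomputable section

open MeasureTheory Real

/-- The (geometer's, nonnegative) Euclidean Laplacian `Δ f = -∑ ∂ᵢ² f`. -/
def euclLap {n : ℕ} (f : EuclideanSpace ℝ (Fin n) → ℝ) (x : EuclideanSpace ℝ (Fin n)) : ℝ :=
  -∑ i : Fin n,
    iteratedFDeriv ℝ 2 f x ![EuclideanSpace.single i 1, EuclideanSpace.single i 1]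

/-- The constant `ρ_{n,k} = (∏_{l=-k}^{k-1} (n+2l))^{-1/k}`. -/
def rhoNK (n k : ℕ) : ℝ :=
  (∏ j ∈ Finset.range (2 * k), ((n : ℝ) + 2 * j - 2 * k)) ^ (-(1 : ℝ) / k)

/-- The standard Euclidean bubble `B(y) = (1 + ρ_{n,k}|y|²)^{-(n-2k)/2}`. -/
def bubble (n k : ℕ) (y : EuclideanSpace ℝ (Fin n)) : ℝ :=
  (1 + rhoNK n k * ‖y‖ ^ 2) ^ (-(((n : ℝ) - 2 * k) / 2))

/-- `Z_j = ∂B/∂y_j`. -/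
def Zj (n k : ℕ) (j : Fin n) (y : EuclideanSpace ℝ (Fin n)) : ℝ :=
  fderiv ℝ (bubble n k) y (EuclideanSpace.single j 1)

/-!
Write `q = 1 + ρ‖y‖²` and `L_s = y_j q^{-s}`, so that `Z_j = -(n - 2k) ρ L_σ` with
`σ = (n - 2k)/2 + 1`. For the nonnegative Laplacian `euclLap` (Mathlib's `Δ` has the opposite sign)
a direct computation gives `Δ L_s = 4ρ (s (n/2 - s) L_{s+1} + s (s+1) L_{s+2})`, so for
`F_t = (σ)_t L_{σ+t}` (rising factorial) one gets `Δ F_t = 4ρ ((k - 1 - t) F_{t+1} + F_{t+2})`.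
Iterating, `Δ^m F_0 = (4ρ)^m ∑_i C(m,i) (k - m)_i F_{2m-i}`; at `m = k` every term with `i ≥ 1`
carries the factor `(0)_i = 0`, so `Δ^k Z_j` is a multiple of `L_{σ+2k} = q^{-2k} L_σ`, and the
definition of `ρ` makes the constant `(4ρ)^k (σ)_{2k}` equal to `(n + 2k)/(n - 2k)`.
-/

open Finset Polynomial InnerProductSpace Laplacian Module

theorem ascPochhammer_succ_eval_left {R : Type*} [CommSemiring R] (n : ℕ) (x : R) :
    (ascPochhammer R (n + 1)).eval x = x * (ascPochhammer R n).eval (x + 1) := by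
  simp [ascPochhammer_succ_left, eval_comp]

theorem ascPochhammer_eval_eq_prod_range {R : Type*} [CommSemiring R] (n : ℕ) (x : R) :
    (ascPochhammer R n).eval x = ∏ i ∈ range n, (x + i) := by
  induction n with
  | zero => simp
  | succ n ih => rw [ascPochhammer_succ_eval, ih, prod_range_succ]

section ShiftRecursion

variable {R V : Type*} [CommRing R] [AddCommGroup V] [Module R V]

def shiftCoeff (c : R) (m i : ℕ) : R :=
  m.choose i * (ascPochhammer R i).eval (c + 1 - m)

theorem shiftCoeff_zero_right (c : R) (m : ℕ) : shiftCoeff c m 0 = 1 := by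
  simp [shiftCoeff]

theorem shiftCoeff_of_lt (c : R) {m i : ℕ} (h : m < i) : shiftCoeff c m i = 0 := by
  simp [shiftCoeff, Nat.choose_eq_zero_of_lt h]

theorem shiftCoeff_succ_succ (c : R) (m i : ℕ) :
    shiftCoeff c (m + 1) (i + 1) = shiftCoeff c m (i + 1) + (c - 2 * m + i) * shiftCoeff c m i := by
  rcases lt_or_ge m i with h | h
  · rw [shiftCoeff_of_lt c (by omega : m + 1 < i + 1), shiftCoeff_of_lt c (by omega : m < i + 1),
      shiftCoeff_of_lt c h]
    ring
  have hchoose : (m.choose (i + 1) : R) * (i + 1) = m.choose i * (m - i) := by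
    rw [← Nat.cast_sub h]
    exact_mod_cast congrArg (Nat.cast : ℕ → R) (Nat.choose_succ_right_eq m i)
  have hx : c + 1 - ((m + 1 : ℕ) : R) = c + 1 - m - 1 := by push_cast; ring
  rw [shiftCoeff, shiftCoeff, shiftCoeff, hx, ascPochhammer_succ_eval_left, sub_add_cancel,
    ascPochhammer_succ_eval, Nat.choose_succ_succ', Nat.cast_add]
  linear_combination -(ascPochhammer R i).eval (c + 1 - m) * hchoose

-- `T` need only be linear on combinations of the `F t`, as the Laplacian is on `C²` functions.
variable {T : V → V} {F : ℕ → V} {c r : R}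

theorem iterate_apply_zero_eq_sum_shiftCoeff
    (hT : ∀ (s : Finset ℕ) (a : ℕ → R) (t : ℕ → ℕ),
      T (∑ i ∈ s, a i • F (t i)) = ∑ i ∈ s, a i • T (F (t i)))
    (hF : ∀ t : ℕ, T (F t) = r • ((c - t) • F (t + 1) + F (t + 2))) (m : ℕ) :
    T^[m] (F 0) = ∑ i ∈ range (m + 1), (r ^ m * shiftCoeff c m i) • F (2 * m - i) := by
  induction m with
  | zero => simp [shiftCoeff_zero_right]
  | succ m ih =>
    have hstep : ∀ i ∈ range (m + 1), (r ^ m * shiftCoeff c m i) • T (F (2 * m - i)) =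
        (r ^ (m + 1) * ((c - 2 * m + i) * shiftCoeff c m i)) • F (2 * m + 1 - i)
          + (r ^ (m + 1) * shiftCoeff c m i) • F (2 * m + 2 - i) := by
      intro i hi
      have hi : i ≤ m := Nat.lt_succ_iff.mp (mem_range.mp hi)
      rw [hF, Nat.cast_sub (by omega), show 2 * m - i + 1 = 2 * m + 1 - i by omega,
        show 2 * m - i + 2 = 2 * m + 2 - i by omega]
      simp only [smul_add, smul_smul]
      congr 2 <;> push_cast <;> ring
    have hidx : ∀ i, 2 * m + 2 - (i + 1) = 2 * m + 1 - i := fun i => by omega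
    rw [Function.iterate_succ_apply', ih, hT, sum_congr rfl hstep, sum_add_distrib,
      sum_range_succ' _ (m + 1), sum_range_succ' (fun i => _ • F (2 * m + 2 - i))]
    simp only [shiftCoeff_succ_succ, mul_add, add_smul, sum_add_distrib, hidx]
    rw [sum_range_succ (fun i => (r ^ (m + 1) * shiftCoeff c m (i + 1)) • F (2 * m + 1 - i))]
    simp [shiftCoeff_of_lt, shiftCoeff_zero_right]
    abel

theorem iterate_apply_zero_eq_smul
    (hT : ∀ (s : Finset ℕ) (a : ℕ → R) (t : ℕ → ℕ),
      T (∑ i ∈ s, a i • F (t i)) = ∑ i ∈ s, a i • T (F (t i)))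
    (hF : ∀ t : ℕ, T (F t) = r • ((c - t) • F (t + 1) + F (t + 2))) {k : ℕ} (hc : c + 1 = k) :
    T^[k] (F 0) = r ^ k • F (2 * k) := by
  rw [iterate_apply_zero_eq_sum_shiftCoeff hT hF, sum_range_succ', sum_eq_zero, zero_add,
    shiftCoeff_zero_right, mul_one, Nat.sub_zero]
  intro i _
  simp [shiftCoeff, hc]

end ShiftRecursion

theorem iteratedFDeriv_two_apply_eq_fderiv_fderiv_apply {𝕜 E F : Type*} [NontriviallyNormedField 𝕜]
    [NormedAddCommGroup E] [NormedSpace 𝕜 E] [NormedAddCommGroup F] [NormedSpace 𝕜 F]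
    {f : E → F} {z : E} (hf : DifferentiableAt 𝕜 (fderiv 𝕜 f) z) (v w : E) :
    iteratedFDeriv 𝕜 2 f z ![v, w] = fderiv 𝕜 (fun x => fderiv 𝕜 f x w) z v := by
  rw [iteratedFDeriv_two_apply, fderiv_clm_apply hf (differentiableAt_const w)]
  simp

section LinearBubble

variable {E : Type*} [NormedAddCommGroup E] {ρ : ℝ}

theorem one_add_mul_norm_sq_pos (hρ : 0 ≤ ρ) (z : E) : 0 < 1 + ρ * ‖z‖ ^ 2 := by
  positivity

variable [InnerProductSpace ℝ E]

def linearBubble (a : E) (ρ s : ℝ) (z : E) : ℝ :=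
  ⟪a, z⟫_ℝ * (1 + ρ * ‖z‖ ^ 2) ^ (-s)

/-- The rising-factorial weight turns `Δ` on this family into a three-term relation with leading
coefficient one, see `laplacian_smul_risingLinearBubble`. -/
def risingLinearBubble (a : E) (ρ σ : ℝ) (t : ℕ) : E → ℝ :=
  (ascPochhammer ℝ t).eval σ • linearBubble a ρ (σ + t)

theorem contDiff_one_add_mul_norm_sq_rpow (hρ : 0 ≤ ρ) (p : ℝ) {m : WithTop ℕ∞} :
    ContDiff ℝ m fun z : E => (1 + ρ * ‖z‖ ^ 2) ^ p :=
  (contDiff_const.add (contDiff_const.mul (contDiff_norm_sq ℝ))).rpow_const_of_ne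
    fun z => (one_add_mul_norm_sq_pos hρ z).ne'

theorem hasFDerivAt_one_add_mul_norm_sq_rpow (hρ : 0 ≤ ρ) (p : ℝ) (z : E) :
    HasFDerivAt (fun z : E => (1 + ρ * ‖z‖ ^ 2) ^ p)
      ((2 * ρ * p * (1 + ρ * ‖z‖ ^ 2) ^ (p - 1)) • innerSL ℝ z) z := by
  have h := (((hasStrictFDerivAt_norm_sq z).hasFDerivAt.const_mul ρ).const_add 1).rpow_const
    (p := p) (Or.inl (one_add_mul_norm_sq_pos hρ z).ne')
  convert h using 1
  ext v
  simp
  ring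

theorem fderiv_one_add_mul_norm_sq_rpow_apply (hρ : 0 ≤ ρ) (p : ℝ) (z a : E) :
    fderiv ℝ (fun z : E => (1 + ρ * ‖z‖ ^ 2) ^ (-p)) z a
      = -(2 * ρ * p) * linearBubble a ρ (p + 1) z := by
  rw [(hasFDerivAt_one_add_mul_norm_sq_rpow hρ (-p) z).fderiv]
  simp [linearBubble, real_inner_comm]
  ring_nf

theorem linearBubble_eq_mul (hρ : 0 ≤ ρ) (a : E) (s : ℝ) (z : E) :
    linearBubble a ρ s z = (1 + ρ * ‖z‖ ^ 2) * linearBubble a ρ (s + 1) z := by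
  rw [linearBubble, linearBubble, neg_add', Real.rpow_sub_one (one_add_mul_norm_sq_pos hρ z).ne']
  field_simp [(one_add_mul_norm_sq_pos hρ z).ne']

theorem rpow_neg_mul_linearBubble (hρ : 0 ≤ ρ) (a : E) (r s : ℝ) (z : E) :
    (1 + ρ * ‖z‖ ^ 2) ^ (-r) * linearBubble a ρ s z = linearBubble a ρ (s + r) z := by
  rw [linearBubble, linearBubble, mul_left_comm, ← Real.rpow_add (one_add_mul_norm_sq_pos hρ z)]
  ring_nf

theorem contDiff_linearBubble (hρ : 0 ≤ ρ) (a : E) (s : ℝ) {m : WithTop ℕ∞} :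
    ContDiff ℝ m (linearBubble a ρ s) :=
  (innerSL ℝ a).contDiff.mul (contDiff_one_add_mul_norm_sq_rpow hρ (-s))

theorem contDiff_risingLinearBubble (hρ : 0 ≤ ρ) (a : E) (σ : ℝ) (t : ℕ) {m : WithTop ℕ∞} :
    ContDiff ℝ m (risingLinearBubble a ρ σ t) :=
  (contDiff_linearBubble hρ a (σ + t)).const_smul ((ascPochhammer ℝ t).eval σ)

theorem hasFDerivAt_linearBubble (hρ : 0 ≤ ρ) (a : E) (s : ℝ) (z : E) :
    HasFDerivAt (linearBubble a ρ s)
      ((1 + ρ * ‖z‖ ^ 2) ^ (-s) • innerSL ℝ a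
        - (2 * ρ * s * linearBubble a ρ (s + 1) z) • innerSL ℝ z) z := by
  refine ((innerSL ℝ a).hasFDerivAt.mul
    (hasFDerivAt_one_add_mul_norm_sq_rpow hρ (-s) z)).congr_fderiv ?_
  ext v
  simp [linearBubble]
  ring_nf

theorem iteratedFDeriv_two_linearBubble_apply (hρ : 0 ≤ ρ) (a : E) (s : ℝ) (z v : E) :
    iteratedFDeriv ℝ 2 (linearBubble a ρ s) z ![v, v]
      = -(2 * ρ * s) * (2 * ⟪a, v⟫_ℝ * ⟪v, z⟫_ℝ * (1 + ρ * ‖z‖ ^ 2) ^ (-(s + 1))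
          + ‖v‖ ^ 2 * linearBubble a ρ (s + 1) z)
        + 4 * ρ ^ 2 * s * (s + 1) * ⟪v, z⟫_ℝ ^ 2 * linearBubble a ρ (s + 2) z := by
  have hdiff : DifferentiableAt ℝ (fderiv ℝ (linearBubble a ρ s)) z :=
    ((contDiff_linearBubble hρ a s (m := 2)).fderiv_right le_rfl).differentiable one_ne_zero z
  have hfirst : (fun w => fderiv ℝ (linearBubble a ρ s) w v)
      = fun w => ⟪a, v⟫_ℝ * (1 + ρ * ‖w‖ ^ 2) ^ (-s)
          - 2 * ρ * s * (⟪v, w⟫_ℝ * linearBubble a ρ (s + 1) w) := by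
    funext w
    simp [(hasFDerivAt_linearBubble hρ a s w).fderiv, real_inner_comm]
    ring
  have hsecond : HasFDerivAt (fun w => ⟪a, v⟫_ℝ * (1 + ρ * ‖w‖ ^ 2) ^ (-s)
      - 2 * ρ * s * (⟪v, w⟫_ℝ * linearBubble a ρ (s + 1) w)) _ z :=
    ((hasFDerivAt_one_add_mul_norm_sq_rpow hρ (-s) z).const_mul ⟪a, v⟫_ℝ).sub
      (((innerSL ℝ v).hasFDerivAt.mul (hasFDerivAt_linearBubble hρ a (s + 1) z)).const_mul
        (2 * ρ * s))
  rw [iteratedFDeriv_two_apply_eq_fderiv_fderiv_apply hdiff, hfirst, hsecond.fderiv]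
  simp [real_inner_comm, linearBubble]
  ring_nf

theorem laplacian_linearBubble [FiniteDimensional ℝ E] (hρ : 0 ≤ ρ) (a : E) (s : ℝ) :
    Δ (linearBubble a ρ s) = -(4 * ρ) • ((s * (finrank ℝ E / 2 - s)) • linearBubble a ρ (s + 1)
      + (s * (s + 1)) • linearBubble a ρ (s + 2)) := by
  set b := stdOrthonormalBasis ℝ E
  funext z
  have hinner : ∑ i, ⟪a, b i⟫_ℝ * ⟪b i, z⟫_ℝ = ⟪a, z⟫_ℝ := b.sum_inner_mul_inner a z
  have hnorm : ∑ i, ⟪b i, z⟫_ℝ ^ 2 = ‖z‖ ^ 2 := by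
    simpa [← sq, real_inner_comm, real_inner_self_eq_norm_sq] using b.sum_inner_mul_inner z z
  have hcard : ∑ i, ‖b i‖ ^ 2 = (finrank ℝ E : ℝ) := by simp [b.orthonormal.1]
  have hL₁ : linearBubble a ρ (s + 1) z = (1 + ρ * ‖z‖ ^ 2) * linearBubble a ρ (s + 2) z := by
    rw [linearBubble_eq_mul hρ a (s + 1) z, add_assoc, one_add_one_eq_two]
  have hQ : ⟪a, z⟫_ℝ * (1 + ρ * ‖z‖ ^ 2) ^ (-(s + 1))
      = (1 + ρ * ‖z‖ ^ 2) * linearBubble a ρ (s + 2) z := hL₁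
  rw [laplacian_eq_iteratedFDeriv_orthonormalBasis _ b]
  simp only [iteratedFDeriv_two_linearBubble_apply hρ, Pi.smul_apply, Pi.add_apply, smul_eq_mul]
  set Q := (1 + ρ * ‖z‖ ^ 2) ^ (-(s + 1))
  set L₁ := linearBubble a ρ (s + 1) z
  set L₂ := linearBubble a ρ (s + 2) z
  rw [sum_congr rfl fun i _ => show _ = (-(4 * ρ * s) * Q) * (⟪a, b i⟫_ℝ * ⟪b i, z⟫_ℝ)
      + (-(2 * ρ * s) * L₁) * ‖b i‖ ^ 2 + (4 * ρ ^ 2 * s * (s + 1) * L₂) * ⟪b i, z⟫_ℝ ^ 2 by ring]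
  simp only [sum_add_distrib, ← mul_sum, hinner, hnorm, hcard]
  linear_combination (-(4 * ρ * s)) * hQ - (4 * ρ * s ^ 2) * hL₁

theorem laplacian_smul_risingLinearBubble [FiniteDimensional ℝ E] (hρ : 0 ≤ ρ) (a : E)
    (σ C : ℝ) (t : ℕ) :
    Δ (C • risingLinearBubble a ρ σ t) = -(4 * ρ) • ((finrank ℝ E / 2 - σ - t)
      • (C • risingLinearBubble a ρ σ (t + 1)) + C • risingLinearBubble a ρ σ (t + 2)) := by
  funext z
  have hsmooth := (contDiff_linearBubble hρ a (σ + t) (m := 2)).contDiffAt (x := z)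
  rw [risingLinearBubble, smul_smul, laplacian_smul _ hsmooth, laplacian_linearBubble hρ]
  simp only [risingLinearBubble, ascPochhammer_succ_eval, Pi.smul_apply, Pi.add_apply, smul_eq_mul,
    Nat.cast_add, Nat.cast_one, Nat.cast_ofNat, ← add_assoc]
  ring

end LinearBubble

section Euclidean

variable {n : ℕ}

theorem euclLap_eq_neg_laplacian (f : EuclideanSpace ℝ (Fin n) → ℝ) : euclLap f = -Δ f := by
  rw [laplacian_eq_iteratedFDeriv_orthonormalBasis f (EuclideanSpace.basisFun (Fin n) ℝ)]
  funext x
  simp [euclLap]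

theorem euclLap_sum_smul {ι : Type*} (s : Finset ι) (a : ι → ℝ)
    (f : ι → EuclideanSpace ℝ (Fin n) → ℝ) (hf : ∀ i ∈ s, ContDiff ℝ 2 (f i)) :
    euclLap (∑ i ∈ s, a i • f i) = ∑ i ∈ s, a i • euclLap (f i) := by
  funext x
  rw [euclLap, iteratedFDeriv_sum_apply (f := fun i => a i • f i)
    fun i hi => ((hf i hi).const_smul (a i)).contDiffAt]
  simp only [_root_.sum_apply, Finset.sum_apply, Pi.smul_apply, euclLap, smul_eq_mul, mul_neg,
    sum_neg_distrib, mul_sum]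
  rw [sum_comm]
  refine congrArg _ (sum_congr rfl fun i hi => sum_congr rfl fun v _ => ?_)
  rw [iteratedFDeriv_const_smul_apply (hf i hi).contDiffAt]
  rfl

theorem euclLap_smul_risingLinearBubble {ρ : ℝ} (hρ : 0 ≤ ρ) (a : EuclideanSpace ℝ (Fin n))
    (σ C : ℝ) (t : ℕ) :
    euclLap (C • risingLinearBubble a ρ σ t) = (4 * ρ) • (((n : ℝ) / 2 - σ - t)
      • (C • risingLinearBubble a ρ σ (t + 1)) + C • risingLinearBubble a ρ σ (t + 2)) := by
  rw [euclLap_eq_neg_laplacian, laplacian_smul_risingLinearBubble hρ, finrank_euclideanSpace_fin,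
    neg_smul, neg_neg]

end Euclidean

theorem cast_sub_two_mul_pos {n k : ℕ} (h : 2 * k < n) : (0 : ℝ) < n - 2 * k := by
  have : (2 * k : ℝ) < n := by exact_mod_cast h
  linarith

theorem rhoNK_base_pos {n k : ℕ} (h : 2 * k < n) :
    0 < ∏ j ∈ range (2 * k), ((n : ℝ) + 2 * j - 2 * k) :=
  prod_pos fun j _ => by linarith [cast_sub_two_mul_pos h, (j.cast_nonneg : (0 : ℝ) ≤ j)]

theorem rhoNK_pos {n k : ℕ} (h : 2 * k < n) : 0 < rhoNK n k :=
  Real.rpow_pos_of_pos (rhoNK_base_pos h) _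

theorem rhoNK_pow_mul_ascPochhammer {n k : ℕ} (h : 2 * k < n) :
    rhoNK n k ^ k * (4 ^ k * (ascPochhammer ℝ (2 * k)).eval (((n : ℝ) - 2 * k) / 2)) = 1 := by
  rcases Nat.eq_zero_or_pos k with rfl | hk
  · simp
  have hprod : ∏ j ∈ range (2 * k), ((n : ℝ) + 2 * j - 2 * k)
      = 4 ^ k * (ascPochhammer ℝ (2 * k)).eval (((n : ℝ) - 2 * k) / 2) := by
    rw [ascPochhammer_eval_eq_prod_range, show (4 : ℝ) ^ k = ∏ _j ∈ range (2 * k), (2 : ℝ) by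
      rw [prod_const, card_range, pow_mul]; norm_num, ← prod_mul_distrib]
    exact prod_congr rfl fun j _ => by ring
  have hpos : 0 < ∏ j ∈ range (2 * k), ((n : ℝ) + 2 * j - 2 * k) := rhoNK_base_pos h
  rw [← hprod, rhoNK, ← Real.rpow_mul_natCast hpos.le,
    div_mul_cancel₀ _ (by positivity : (k : ℝ) ≠ 0), Real.rpow_neg_one, inv_mul_cancel₀ hpos.ne']

theorem four_mul_rhoNK_pow_mul_ascPochhammer {n k : ℕ} (h : 2 * k < n) :
    (4 * rhoNK n k) ^ k * (ascPochhammer ℝ (2 * k)).eval (((n : ℝ) - 2 * k) / 2 + 1)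
      = ((n : ℝ) + 2 * k) / ((n : ℝ) - 2 * k) := by
  have hshift := ascPochhammer_succ_eval_left (2 * k) (((n : ℝ) - 2 * k) / 2)
  rw [ascPochhammer_succ_eval] at hshift
  push_cast at hshift
  rw [eq_div_iff (cast_sub_two_mul_pos h).ne']
  linear_combination ((n : ℝ) + 2 * k) * rhoNK_pow_mul_ascPochhammer h
    - 2 * (4 * rhoNK n k) ^ k * hshift

theorem Zj_eq_smul_risingLinearBubble {n k : ℕ} (h : 2 * k < n) (j : Fin n) :
    Zj n k j = (-((n : ℝ) - 2 * k) * rhoNK n k)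
      • risingLinearBubble (EuclideanSpace.single j 1) (rhoNK n k)
          (((n : ℝ) - 2 * k) / 2 + 1) 0 := by
  funext y
  unfold Zj bubble
  rw [fderiv_one_add_mul_norm_sq_rpow_apply (rhoNK_pos h).le]
  simp [risingLinearBubble]
  ring

theorem bubble_rpow_mul_linearBubble {n k : ℕ} (h : 2 * k < n) (a : EuclideanSpace ℝ (Fin n))
    (s : ℝ) (y : EuclideanSpace ℝ (Fin n)) :
    bubble n k y ^ ((4 * k : ℝ) / ((n : ℝ) - 2 * k)) * linearBubble a (rhoNK n k) s y
      = linearBubble a (rhoNK n k) (s + 2 * k) y := by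
  have hn := (cast_sub_two_mul_pos h).ne'
  rw [bubble, ← Real.rpow_mul (one_add_mul_norm_sq_pos (rhoNK_pos h).le y).le,
    show -(((n : ℝ) - 2 * k) / 2) * ((4 * k : ℝ) / ((n : ℝ) - 2 * k)) = -(2 * k) by
      field_simp; ring,
    rpow_neg_mul_linearBubble (rhoNK_pos h).le]

theorem Zj_satisfies_linearized_equation_general (n k : ℕ) (hnk : 2 * k < n) (j : Fin n) :
    ∀ y : EuclideanSpace ℝ (Fin n),
      (euclLap^[k] (Zj n k j)) y
        = ((n : ℝ) + 2 * k) / ((n : ℝ) - 2 * k)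
            * bubble n k y ^ ((4 * k : ℝ) / ((n : ℝ) - 2 * k)) * Zj n k j y := by
  intro y
  have hρ := (rhoNK_pos hnk).le
  set σ : ℝ := ((n : ℝ) - 2 * k) / 2 + 1
  set F : ℕ → EuclideanSpace ℝ (Fin n) → ℝ := fun t => (-((n : ℝ) - 2 * k) * rhoNK n k)
      • risingLinearBubble (EuclideanSpace.single j 1) (rhoNK n k) σ t with hF_def
  have hT : ∀ (s : Finset ℕ) (a : ℕ → ℝ) (t : ℕ → ℕ),
      euclLap (∑ i ∈ s, a i • F (t i)) = ∑ i ∈ s, a i • euclLap (F (t i)) := fun s a t =>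
    euclLap_sum_smul s a _ fun i _ =>
      (contDiff_risingLinearBubble hρ (EuclideanSpace.single j 1) σ (t i)).const_smul
        (-((n : ℝ) - 2 * k) * rhoNK n k)
  have hF (t : ℕ) : euclLap (F t)
      = (4 * rhoNK n k) • (((n : ℝ) / 2 - σ - t) • F (t + 1) + F (t + 2)) :=
    euclLap_smul_risingLinearBubble hρ _ σ _ t
  rw [show Zj n k j = F 0 from Zj_eq_smul_risingLinearBubble hnk j,
    iterate_apply_zero_eq_smul hT hF (by ring : (n : ℝ) / 2 - σ + 1 = k)]
  simp only [hF_def, Pi.smul_apply, risingLinearBubble, smul_eq_mul]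
  rw [← four_mul_rhoNK_pow_mul_ascPochhammer hnk]
  have hB := bubble_rpow_mul_linearBubble hnk (EuclideanSpace.single j 1) σ y
  push_cast at hB ⊢
  simp only [add_zero, ascPochhammer_zero, eval_one, one_mul]
  linear_combination ((n : ℝ) - 2 * k) * rhoNK n k * (4 * rhoNK n k) ^ k
    * (ascPochhammer ℝ (2 * k)).eval σ * hB

theorem Zj_satisfies_linearized_equation (n k : ℕ) (hk : 1 ≤ k) (hnk : 2 * k < n) (j : Fin n) :
    ∀ y : EuclideanSpace ℝ (Fin n),
      (euclLap^[k] (Zj n k j)) y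
        = ((n : ℝ) + 2 * k) / ((n : ℝ) - 2 * k)
            * bubble n k y ^ ((4 * k : ℝ) / ((n : ℝ) - 2 * k)) * Zj n k j y :=
  Zj_satisfies_linearized_equation_general n k hnk j
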